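/- For every m > 3, the vector d = (1, 2, …, m−2, (m−2)(m−1)/2, (m−2)(m−1)/2) ∈ ℕ^m is 1-balanced but not 2-balanced. -/

import Mathlib

open scoped BigOperators

def kBalanced {m : ℕ} (d : Fin m → ℕ) (k : ℕ) : Prop :=
  ∀ I : Finset (Fin m), I.card = k → ∑ i ∈ I, d i < ∑ i ∈ Iᶜ, d i

/-! The first `m - 2` entries sum to the triangular number `T = (m - 2)(m - 1)/2`, so the total is
`3T`. Every entry is at most `T < 3T/2`, which is `1`-balancedness, while the two last entries
sum to `2T`, which is not less than the remaining `T`. -/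

open Finset

theorem kBalanced_iff_two_mul_sum_lt {m : ℕ} (d : Fin m → ℕ) (k : ℕ) :
    kBalanced d k ↔ ∀ I : Finset (Fin m), #I = k → 2 * ∑ i ∈ I, d i < ∑ i, d i := by
  refine forall₂_congr fun I _ => ?_
  rw [← sum_add_sum_compl I d]
  omega

theorem kBalanced_one_iff {m : ℕ} (d : Fin m → ℕ) :
    kBalanced d 1 ↔ ∀ i, 2 * d i < ∑ j, d j := by
  simp [kBalanced_iff_two_mul_sum_lt, card_eq_one]

def triangularTwinTail (m : ℕ) : Fin m → ℕ :=
  fun i => if (i : ℕ) < m - 2 then (i : ℕ) + 1 else (m - 2) * (m - 1) / 2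

theorem sum_triangularTwinTail {m : ℕ} (hm : 2 ≤ m) :
    ∑ i, triangularTwinTail m i = 3 * ((m - 2) * (m - 1) / 2) := by
  obtain ⟨n, rfl⟩ : ∃ n, m = n + 2 := ⟨m - 2, by omega⟩
  have hgauss : ∑ i : Fin n, ((i : ℕ) + 1) = n * (n + 1) / 2 := by
    rw [Fin.sum_univ_eq_sum_range (· + 1), ← add_zero (∑ i ∈ range n, (i + 1)),
      ← sum_range_succ' (·), sum_range_id, Nat.add_sub_cancel, mul_comm]
  have hsub : n + 2 - 1 = n + 1 := rfl
  simp only [Fin.sum_univ_castSucc, triangularTwinTail, Fin.val_castSucc, Fin.val_last,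
    Nat.add_sub_cancel, hsub, Fin.is_lt, if_true, lt_irrefl, if_false, hgauss]
  rw [if_neg (by omega)]
  ring

theorem triangularTwinTail_le {m : ℕ} (i : Fin m) :
    triangularTwinTail m i ≤ (m - 2) * (m - 1) / 2 := by
  unfold triangularTwinTail
  split_ifs with h
  · have : (m - 2) * 2 ≤ (m - 2) * (m - 1) := Nat.mul_le_mul_left _ (by omega)
    omega
  · rfl

theorem triangularTwinTail_kBalanced_one {m : ℕ} (hm : 3 ≤ m) :
    kBalanced (triangularTwinTail m) 1 := by
  have hM : 0 < (m - 2) * (m - 1) / 2 := by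
    have : 1 * 2 ≤ (m - 2) * (m - 1) := Nat.mul_le_mul (by omega) (by omega)
    omega
  rw [kBalanced_one_iff, sum_triangularTwinTail (by omega)]
  intro i
  have := triangularTwinTail_le i
  omega

theorem triangularTwinTail_not_kBalanced_two {m : ℕ} (hm : 2 ≤ m) :
    ¬ kBalanced (triangularTwinTail m) 2 := by
  have hlast (i : Fin m) (hi : m - 2 ≤ i) : triangularTwinTail m i = (m - 2) * (m - 1) / 2 :=
    if_neg (by omega)
  let a : Fin m := ⟨m - 2, by omega⟩
  let b : Fin m := ⟨m - 1, by omega⟩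
  have hab : a ≠ b := by simp [a, b, Fin.ext_iff]; omega
  rw [kBalanced_iff_two_mul_sum_lt, sum_triangularTwinTail hm]
  push Not
  refine ⟨{a, b}, card_pair hab, ?_⟩
  rw [sum_pair hab, hlast a le_rfl, hlast b (by simp [b]; omega)]
  omega

/-- For every `m > 3`, the vector `d = (1, 2, …, m−2, (m−2)(m−1)/2, (m−2)(m−1)/2)` is
`1`-balanced but not `2`-balanced. -/
theorem example_one_balanced_not_two_balanced (m : ℕ) (hm : 3 < m) :
    kBalanced (fun i : Fin m => if (i : ℕ) < m - 2 then (i : ℕ) + 1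
      else (m - 2) * (m - 1) / 2) 1 ∧
    ¬ kBalanced (fun i : Fin m => if (i : ℕ) < m - 2 then (i : ℕ) + 1
      else (m - 2) * (m - 1) / 2) 2 :=
  ⟨triangularTwinTail_kBalanced_one hm.le, triangularTwinTail_not_kBalanced_two (by omega)⟩
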